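/- Let a ∈ 𝔄⁺ be a non-constant sequence such that a ∈ 𝔄̂_{m,p} for some integer m ≥ 1 and some p ∈ (0,∞). Then there exist a unique integer m₀ ≥ 2 and a unique p₀ ∈ (0,∞) such that: (1) for all integers μ ≥ 1 and all q ∈ (0,∞), a ∈ 𝔄̂_{μ,q} if and only if (μ,q) = (k(m₀-1)+1, k·p₀) for some integer k ≥ 1; and (2) for all integers μ ≥ 1 and all q ∈ (0,∞), a ∈ 𝔄_{μ,q} if and only if q = k·p₀ for some integer k ≥ 1 with μ > k(m₀-1). -/

import Mathlib

/-!
From `D^m (a^p) = 0` we get `a^p = P` on `ℕ` for a polynomial `P` of degree `d ≥ 1`, so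
`a^q = P^(q/p)`. Comparing growth rates, if `a^q` is a polynomial sequence `R` then
`deg R = (q/p) d`; thus `q` is determined by the positive integer `e = deg R`. These admissible
`e` are closed under sums (products of the `R`) and under positive differences (`R₁^d ∣ R₂^d`
forces `R₁ ∣ R₂`, as `ℝ[X]` is integrally closed), so they are exactly the multiples of the least
one, `g`. Hence `D^μ (a^q) = 0` iff `q = k p₀` with `p₀ = g p / d` and `k g < μ`, and the sharp
orders are `μ = k g + 1`, i.e. `m₀ = g + 1`.
-/

/-- The `m`-th iterated forward difference of a real sequence, evaluated at `n`:
`(D^m a)_n = ∑_{k=0}^{m} (-1)^k (m choose k) a_{n+k}`. -/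
def Dseq (a : ℕ → ℝ) (m n : ℕ) : ℝ :=
  ∑ k ∈ Finset.range (m + 1), (-1 : ℝ) ^ k * (m.choose k : ℝ) * a (n + k)

/-- `a ∈ 𝔄_{m,p}`: a nonnegative sequence with `D^m (a^p) = 0`. -/
def MemA (a : ℕ → ℝ) (m : ℕ) (p : ℝ) : Prop :=
  (∀ n, 0 ≤ a n) ∧ ∀ n, Dseq (fun j => a j ^ p) m n = 0

/-- `a ∈ 𝔄̂_{m,p}`: `a ∈ 𝔄_{m,p}` and `D^{m-1} (a^p) ≠ 0`. -/
def MemAhat (a : ℕ → ℝ) (m : ℕ) (p : ℝ) : Prop :=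
  MemA a m p ∧ ¬ ∀ n, Dseq (fun j => a j ^ p) (m - 1) n = 0

open Polynomial Filter Topology Finset fwdDiff

lemma Dseq_eq_neg_one_pow_mul_fwdDiff_iter (b : ℕ → ℝ) (m n : ℕ) :
    Dseq b m n = (-1) ^ m * (Δ_[1])^[m] b n := by
  rw [fwdDiff_iter_eq_sum_shift, Dseq, mul_sum]
  refine sum_congr rfl fun k hk => ?_
  obtain ⟨j, rfl⟩ := Nat.exists_eq_add_of_le (Nat.lt_succ_iff.mp (mem_range.mp hk))
  simp only [Nat.add_sub_cancel_left, zsmul_eq_mul, smul_eq_mul, mul_one]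
  push_cast
  have : ((-1 : ℝ) ^ j) ^ 2 = 1 := by rw [← pow_mul, mul_comm, pow_mul]; norm_num
  linear_combination (-(-1 : ℝ) ^ k * ((k + j).choose k) * b (n + k)) * this

lemma fwdDiff_iter_comp_natCast (f : ℝ → ℝ) (m n : ℕ) :
    (Δ_[1])^[m] (fun j : ℕ => f j) n = (Δ_[1])^[m] f n := by
  simp [fwdDiff_iter_eq_sum_shift]

lemma Dseq_eval_eq_zero_of_degree_lt {R : ℝ[X]} {m : ℕ} (hR : R.degree < m) (n : ℕ) :
    Dseq (fun j => R.eval (j : ℝ)) m n = 0 := by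
  rcases eq_or_ne R 0 with rfl | hR0
  · simp [Dseq]
  rw [Dseq_eq_neg_one_pow_mul_fwdDiff_iter, fwdDiff_iter_comp_natCast R.eval,
    fwdDiff_iter_eq_zero_of_degree_lt ((natDegree_lt_iff_degree_lt hR0).2 hR)]
  simp

lemma exists_degree_lt_of_Dseq_eq_zero {b : ℕ → ℝ} {m : ℕ} (h : ∀ n, Dseq b m n = 0) :
    ∃ R : ℝ[X], R.degree < m ∧ ∀ n : ℕ, b n = R.eval (n : ℝ) := by
  have hm : (Δ_[1])^[m] b = 0 := funext fun n => by
    simpa [Dseq_eq_neg_one_pow_mul_fwdDiff_iter] using h n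
  have hvanish : ∀ k ≥ m, (Δ_[1])^[k] b = 0 := fun k hk => by
    obtain ⟨j, rfl⟩ := Nat.exists_eq_add_of_le hk
    rw [add_comm, Function.iterate_add_apply, hm]
    exact Function.iterate_fixed (fwdDiff_const 1 0) j
  refine ⟨∑ k ∈ range m, (((Δ_[1])^[k] b 0) / k.factorial) • descPochhammer ℝ k, ?_, fun n => ?_⟩
  · refine mem_degreeLT.1 (Submodule.sum_mem _ fun k hk => Submodule.smul_mem _ _ ?_)
    rw [mem_degreeLT, degree_eq_natDegree (monic_descPochhammer ℝ k).ne_zero,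
      descPochhammer_natDegree]
    exact_mod_cast mem_range.1 hk
  -- Gregory–Newton: `b n = ∑ k, (n choose k) Δᵏb(0)`, and the terms vanish for `k > n` and `k ≥ m`.
  have hnewton := shift_eq_sum_fwdDiff_iter 1 b n 0
  simp only [smul_eq_mul, mul_one, zero_add, nsmul_eq_mul] at hnewton
  have hterm : ∀ k ≥ min (n + 1) m, (n.choose k : ℝ) * (Δ_[1])^[k] b 0 = 0 := fun k hk => by
    rcases min_le_iff.1 hk with hk | hk
    · rw [Nat.choose_eq_zero_of_lt hk, Nat.cast_zero, zero_mul]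
    · rw [hvanish k hk, Pi.zero_apply, mul_zero]
  rw [hnewton, eventually_constant_sum hterm (min_le_left _ _),
    ← eventually_constant_sum hterm (min_le_right _ _), eval_finsetSum]
  refine sum_congr rfl fun k _ => ?_
  rw [eval_smul, descPochhammer_eval_eq_descFactorial, Nat.descFactorial_eq_factorial_mul_choose,
    smul_eq_mul]
  have : (k.factorial : ℝ) ≠ 0 := by positivity
  push_cast
  field_simp

theorem forall_Dseq_eq_zero_iff (b : ℕ → ℝ) (m : ℕ) :
    (∀ n, Dseq b m n = 0) ↔ ∃ R : ℝ[X], R.degree < m ∧ ∀ n : ℕ, b n = R.eval (n : ℝ) := by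
  refine ⟨exists_degree_lt_of_Dseq_eq_zero, fun ⟨R, hR, hb⟩ n => ?_⟩
  rw [show b = fun j : ℕ => R.eval (j : ℝ) from funext hb]
  exact Dseq_eval_eq_zero_of_degree_lt hR n

lemma leadingCoeff_pos_of_eval_natCast_nonneg {P : ℝ[X]} (hdeg : 0 < P.degree)
    (hP : ∀ n : ℕ, 0 ≤ P.eval (n : ℝ)) : 0 < P.leadingCoeff := by
  by_contra! hlc
  obtain ⟨n, hn⟩ := (((tendsto_atBot_of_leadingCoeff_nonpos P hdeg hlc).comp
    tendsto_natCast_atTop_atTop).eventually_lt_atBot 0).exists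
  exact (hP n).not_gt hn

lemma tendsto_eval_natCast_div_pow (P : ℝ[X]) (hP : P ≠ 0) :
    Tendsto (fun n : ℕ => P.eval (n : ℝ) / (n : ℝ) ^ P.natDegree) atTop (𝓝 P.leadingCoeff) := by
  have h := div_tendsto_atTop_leadingCoeff_div_of_degree_eq P (X ^ P.natDegree)
    (by rw [degree_X_pow, degree_eq_natDegree hP])
  simpa [Function.comp_def] using h.comp tendsto_natCast_atTop_atTop

lemma eq_zero_of_tendsto_natCast_rpow {s c : ℝ} (hc : c ≠ 0)
    (h : Tendsto (fun n : ℕ => (n : ℝ) ^ s) atTop (𝓝 c)) : s = 0 := by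
  by_contra hs
  rcases lt_or_gt_of_ne hs with hs | hs
  · have h0 := (tendsto_rpow_neg_atTop (neg_pos.2 hs)).comp tendsto_natCast_atTop_atTop
    rw [neg_neg] at h0
    exact hc (tendsto_nhds_unique h h0)
  · exact not_tendsto_atTop_of_tendsto_nhds h
      ((tendsto_rpow_atTop hs).comp tendsto_natCast_atTop_atTop)

lemma natDegree_eq_mul_of_eval_rpow {P R : ℝ[X]} (hdeg : 0 < P.degree)
    (hP : ∀ n : ℕ, 0 ≤ P.eval (n : ℝ)) {t : ℝ}
    (hR : ∀ n : ℕ, P.eval (n : ℝ) ^ t = R.eval (n : ℝ)) :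
    (R.natDegree : ℝ) = t * P.natDegree := by
  have hlc := leadingCoeff_pos_of_eval_natCast_nonneg hdeg hP
  have hPpos : ∀ᶠ n : ℕ in atTop, 0 < P.eval (n : ℝ) :=
    ((tendsto_atTop_of_leadingCoeff_nonneg P hdeg hlc.le).comp
      tendsto_natCast_atTop_atTop).eventually_gt_atTop 0
  have hR0 : R ≠ 0 := by
    rintro rfl
    obtain ⟨n, hn⟩ := hPpos.exists
    exact (Real.rpow_pos_of_pos hn t).ne' (by simpa using hR n)
  -- `R(n) / n^(deg R)` and `(P(n) / n^(deg P))^t` have nonzero limits, and their quotient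
  -- is `n^(t deg P - deg R)`.
  have hPt : Tendsto (fun n : ℕ => (P.eval (n : ℝ) / (n : ℝ) ^ P.natDegree) ^ t) atTop
      (𝓝 (P.leadingCoeff ^ t)) :=
    (Real.continuousAt_rpow_const _ t (Or.inl hlc.ne')).tendsto.comp
      (tendsto_eval_natCast_div_pow P (ne_zero_of_degree_gt hdeg))
  have hquot := (tendsto_eval_natCast_div_pow R hR0).div hPt (Real.rpow_pos_of_pos hlc t).ne'
  suffices (P.natDegree : ℝ) * t - R.natDegree = 0 by linarith
  refine eq_zero_of_tendsto_natCast_rpow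
    (div_ne_zero (leadingCoeff_ne_zero.2 hR0) (Real.rpow_pos_of_pos hlc t).ne') (hquot.congr' ?_)
  filter_upwards [eventually_gt_atTop 0, hPpos] with n hn hPn
  have hn : (0 : ℝ) < n := Nat.cast_pos.2 hn
  have hRn : R.eval (n : ℝ) ≠ 0 := hR n ▸ (Real.rpow_pos_of_pos hPn t).ne'
  rw [Pi.div_apply, Real.div_rpow hPn.le (by positivity), hR n,
    ← Real.rpow_natCast (n : ℝ) P.natDegree, ← Real.rpow_mul hn.le,
    ← Real.rpow_natCast (n : ℝ) R.natDegree, Real.rpow_sub hn]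
  have := Real.rpow_pos_of_pos hn (P.natDegree * t)
  have := Real.rpow_pos_of_pos hn R.natDegree
  field_simp

lemma eq_of_eval_natCast_eq {R S : ℝ[X]} (h : ∀ n : ℕ, R.eval (n : ℝ) = S.eval (n : ℝ)) :
    R = S :=
  eq_of_infinite_eval_eq R S ((Set.infinite_range_of_injective Nat.cast_injective).mono
    (by rintro _ ⟨n, rfl⟩; exact h n))

def admissibleNumerators (P : ℝ[X]) : Set ℕ :=
  {e | 0 < e ∧ ∃ R : ℝ[X], ∀ n : ℕ, P.eval (n : ℝ) ^ ((e : ℝ) / P.natDegree) = R.eval (n : ℝ)}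

section admissibleNumerators

variable {P : ℝ[X]}

lemma natDegree_mem_admissibleNumerators (hd : 0 < P.natDegree) :
    P.natDegree ∈ admissibleNumerators P :=
  ⟨hd, P, fun n => by rw [div_self (Nat.cast_ne_zero.2 hd.ne'), Real.rpow_one]⟩

lemma add_mem_admissibleNumerators (hP : ∀ n : ℕ, 0 ≤ P.eval (n : ℝ)) {e₁ e₂ : ℕ}
    (h₁ : e₁ ∈ admissibleNumerators P) (h₂ : e₂ ∈ admissibleNumerators P) :
    e₁ + e₂ ∈ admissibleNumerators P := by
  obtain ⟨he₁, R₁, hR₁⟩ := h₁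
  obtain ⟨he₂, R₂, hR₂⟩ := h₂
  refine ⟨by omega, R₁ * R₂, fun n => ?_⟩
  rw [eval_mul, ← hR₁, ← hR₂, ← Real.rpow_add_of_nonneg (hP n) (by positivity) (by positivity),
    Nat.cast_add, add_div]

lemma pow_natDegree_eq_pow_of_mem (hP : ∀ n : ℕ, 0 ≤ P.eval (n : ℝ)) (hd : 0 < P.natDegree)
    {e : ℕ} {R : ℝ[X]} (hR : ∀ n : ℕ, P.eval (n : ℝ) ^ ((e : ℝ) / P.natDegree) = R.eval (n : ℝ)) :
    R ^ P.natDegree = P ^ e :=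
  eq_of_eval_natCast_eq fun n => by
    rw [eval_pow, eval_pow, ← hR, ← Real.rpow_natCast _ P.natDegree, ← Real.rpow_mul (hP n),
      div_mul_cancel₀ _ (Nat.cast_ne_zero.2 hd.ne'), Real.rpow_natCast]

lemma sub_mem_admissibleNumerators (hP : ∀ n : ℕ, 0 ≤ P.eval (n : ℝ)) (hd : 0 < P.natDegree)
    {e₁ e₂ : ℕ} (h₁ : e₁ ∈ admissibleNumerators P) (h₂ : e₂ ∈ admissibleNumerators P)
    (h : e₁ < e₂) : e₂ - e₁ ∈ admissibleNumerators P := by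
  obtain ⟨-, R₁, hR₁⟩ := h₁
  obtain ⟨-, R₂, hR₂⟩ := h₂
  have hP0 : P ≠ 0 := ne_zero_of_natDegree_gt hd
  have hpow₁ := pow_natDegree_eq_pow_of_mem hP hd hR₁
  have hpow₂ := pow_natDegree_eq_pow_of_mem hP hd hR₂
  obtain ⟨U, hU⟩ : R₁ ∣ R₂ := (IsIntegrallyClosed.pow_dvd_pow_iff hd.ne').1
    (hpow₁ ▸ hpow₂ ▸ pow_dvd_pow P h.le)
  have hUpow : U ^ P.natDegree = P ^ (e₂ - e₁) := mul_left_cancel₀ (pow_ne_zero e₁ hP0) <| by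
    rw [← pow_add, Nat.add_sub_cancel' h.le, ← hpow₁, ← hpow₂, hU, mul_pow]
  refine ⟨by omega, U, fun n => ?_⟩
  have hexp : 0 < ((e₂ - e₁ : ℕ) : ℝ) / P.natDegree := by
    have : 0 < e₂ - e₁ := by omega
    positivity
  rcases (hP n).eq_or_lt with hz | hpos
  · have := congrArg (eval (n : ℝ)) hUpow
    rw [eval_pow, eval_pow, ← hz, zero_pow (by omega)] at this
    rw [← hz, Real.zero_rpow hexp.ne', (pow_eq_zero_iff hd.ne').1 this]
  · have hR₁n : R₁.eval (n : ℝ) ≠ 0 := hR₁ n ▸ (Real.rpow_pos_of_pos hpos _).ne'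
    have hUn : U.eval (n : ℝ) = R₂.eval (n : ℝ) / R₁.eval (n : ℝ) :=
      eq_div_of_mul_eq hR₁n (by rw [← eval_mul, mul_comm, ← hU])
    rw [hUn, ← hR₁, ← hR₂, ← Real.rpow_sub hpos, Nat.cast_sub h.le, sub_div]

end admissibleNumerators

lemma exists_forall_mem_iff_eq_mul {S : Set ℕ} (hne : S.Nonempty) (h0 : 0 ∉ S)
    (hadd : ∀ a ∈ S, ∀ b ∈ S, a + b ∈ S) (hsub : ∀ a ∈ S, ∀ b ∈ S, a < b → b - a ∈ S) :
    ∃ g, 0 < g ∧ ∀ e, e ∈ S ↔ ∃ k, 1 ≤ k ∧ e = k * g := by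
  have hg : sInf S ∈ S := Nat.sInf_mem hne
  have hgpos : 0 < sInf S := Nat.pos_of_ne_zero fun h => h0 (h ▸ hg)
  refine ⟨sInf S, hgpos, fun e => ⟨fun he => ?_, ?_⟩⟩
  · induction e using Nat.strong_induction_on with
    | _ e ih =>
      rcases (Nat.sInf_le he).eq_or_lt with heq | hlt
      · exact ⟨1, le_rfl, by omega⟩
      · obtain ⟨k, hk, hke⟩ := ih (e - sInf S) (by omega) (hsub _ hg _ he hlt)
        exact ⟨k + 1, by omega, by rw [add_mul, one_mul, ← hke]; omega⟩
  · rintro ⟨k, hk, rfl⟩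
    induction k, hk using Nat.le_induction with
    | base => simpa using hg
    | succ k _ ih => simpa [add_mul] using hadd _ ih _ hg

lemma memAhat_iff_memA_and_not_memA {a : ℕ → ℝ} {μ : ℕ} {q : ℝ} :
    MemAhat a μ q ↔ MemA a μ q ∧ ¬ MemA a (μ - 1) q := by
  unfold MemAhat MemA
  tauto

lemma memA_iff_exists_admissibleNumerator {a : ℕ → ℝ} (ha : ∀ n, 0 ≤ a n) {p : ℝ} (hp : 0 < p)
    {P : ℝ[X]} (hP : ∀ n : ℕ, a n ^ p = P.eval (n : ℝ)) (hd : 0 < P.natDegree) (μ : ℕ) {q : ℝ}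
    (hq : 0 < q) :
    MemA a μ q ↔ ∃ e ∈ admissibleNumerators P, q = e * p / P.natDegree ∧ e < μ := by
  have hPnn : ∀ n : ℕ, 0 ≤ P.eval (n : ℝ) := fun n => hP n ▸ Real.rpow_nonneg (ha n) p
  have hdeg : 0 < P.degree := natDegree_pos_iff_degree_pos.1 hd
  have hdR : (0 : ℝ) < P.natDegree := Nat.cast_pos.2 hd
  have hpow : ∀ n : ℕ, a n ^ q = P.eval (n : ℝ) ^ (q / p) := fun n => by
    rw [← hP, ← Real.rpow_mul (ha n), mul_div_cancel₀ _ hp.ne']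
  simp only [MemA, ha, implies_true, true_and, forall_Dseq_eq_zero_iff, hpow]
  constructor
  · rintro ⟨R, hRμ, hR⟩
    have hRd := natDegree_eq_mul_of_eval_rpow hdeg hPnn hR
    have hqR : q / p = R.natDegree / P.natDegree := by rw [hRd]; field_simp
    have hRpos : 0 < R.natDegree := by
      have : (0 : ℝ) < R.natDegree := hRd ▸ by positivity
      exact_mod_cast this
    refine ⟨R.natDegree, ⟨hRpos, R, fun n => by rw [← hqR]; exact hR n⟩, ?_, ?_⟩
    · rw [hRd]; field_simp
    · exact (natDegree_lt_iff_degree_lt (ne_zero_of_natDegree_gt hRpos)).2 hRμ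
  · rintro ⟨e, ⟨-, R, hR⟩, rfl, heμ⟩
    have hRd : R.natDegree = e := by
      have := natDegree_eq_mul_of_eval_rpow hdeg hPnn hR
      rw [div_mul_cancel₀ _ hdR.ne'] at this
      exact_mod_cast this
    refine ⟨R, degree_le_natDegree.trans_lt (by exact_mod_cast hRd ▸ heμ), fun n => ?_⟩
    rw [← hR]
    congr 1
    field_simp

lemma memAhat_iff_exists_of_memA_iff {a : ℕ → ℝ} {g : ℕ} {p₀ : ℝ} (hp₀ : 0 < p₀)
    (hA : ∀ μ q, 0 < q → (MemA a μ q ↔ ∃ k : ℕ, 1 ≤ k ∧ q = k * p₀ ∧ k * g < μ))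
    (μ : ℕ) (q : ℝ) (hq : 0 < q) :
    MemAhat a μ q ↔ ∃ k : ℕ, 1 ≤ k ∧ μ = k * g + 1 ∧ q = k * p₀ := by
  rw [memAhat_iff_memA_and_not_memA, hA μ q hq, hA (μ - 1) q hq]
  constructor
  · rintro ⟨⟨k, hk, rfl, hkμ⟩, hnot⟩
    exact ⟨k, hk, by_contra fun hne => hnot ⟨k, hk, rfl, by omega⟩, rfl⟩
  · rintro ⟨k, hk, rfl, rfl⟩
    refine ⟨⟨k, hk, rfl, by omega⟩, ?_⟩
    rintro ⟨k', -, hkk', hlt⟩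
    obtain rfl : k' = k := by exact_mod_cast (mul_left_inj' hp₀.ne').1 hkk'.symm
    omega

lemma eq_of_forall_exists_mul_iff {g g' : ℕ} {p p' : ℝ} (hg : 0 < g) (hp : 0 < p) (hp' : 0 < p')
    (h : ∀ μ : ℕ, 1 ≤ μ → ∀ q : ℝ, 0 < q → ((∃ k : ℕ, 1 ≤ k ∧ μ = k * g + 1 ∧ q = k * p) ↔
      ∃ k : ℕ, 1 ≤ k ∧ μ = k * g' + 1 ∧ q = k * p')) :
    g = g' ∧ p = p' := by
  obtain ⟨k, -, hgk, hpk⟩ := (h (g + 1) (by omega) p hp).1 ⟨1, le_rfl, by ring, by ring⟩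
  obtain ⟨k', -, hgk', -⟩ := (h (g' + 1) (by omega) p' hp').2 ⟨1, le_rfl, by ring, by ring⟩
  have hk : k = 1 := by
    have : k * k' * g = 1 * g := by
      rw [one_mul, mul_assoc, ← (by omega : g' = k' * g)]
      omega
    exact Nat.eq_one_of_mul_eq_one_right (Nat.eq_of_mul_eq_mul_right hg this)
  subst hk
  constructor
  · omega
  · simpa using hpk

lemma natDegree_pos_of_forall_rpow_eq_eval {a : ℕ → ℝ} (ha : ∀ n, 0 ≤ a n)
    (hnc : ∃ i j : ℕ, a i ≠ a j) {p : ℝ} (hp : 0 < p) {P : ℝ[X]}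
    (hP : ∀ n : ℕ, a n ^ p = P.eval (n : ℝ)) : 0 < P.natDegree := by
  obtain ⟨i, j, hij⟩ := hnc
  refine Nat.pos_of_ne_zero fun h0 => hij ?_
  rw [← Real.rpow_rpow_inv (ha i) hp.ne', ← Real.rpow_rpow_inv (ha j) hp.ne', hP, hP,
    eq_C_of_natDegree_eq_zero h0, eval_C, eval_C]

lemma exists_forall_memA_iff {a : ℕ → ℝ} (hnc : ∃ i j : ℕ, a i ≠ a j) {m : ℕ} {p : ℝ}
    (hp : 0 < p) (hmem : MemA a m p) :
    ∃ g : ℕ, 0 < g ∧ ∃ p₀ : ℝ, 0 < p₀ ∧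
      ∀ μ q, 0 < q → (MemA a μ q ↔ ∃ k : ℕ, 1 ≤ k ∧ q = k * p₀ ∧ k * g < μ) := by
  obtain ⟨ha, hzero⟩ := hmem
  obtain ⟨P, -, hP⟩ := (forall_Dseq_eq_zero_iff _ m).1 hzero
  have hPnn : ∀ n : ℕ, 0 ≤ P.eval (n : ℝ) := fun n => hP n ▸ Real.rpow_nonneg (ha n) p
  have hd := natDegree_pos_of_forall_rpow_eq_eval ha hnc hp hP
  obtain ⟨g, hg, hN⟩ := exists_forall_mem_iff_eq_mul ⟨_, natDegree_mem_admissibleNumerators hd⟩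
    (fun h => h.1.false) (fun _ h₁ _ h₂ => add_mem_admissibleNumerators hPnn h₁ h₂)
    (fun _ h₁ _ h₂ => sub_mem_admissibleNumerators hPnn hd h₁ h₂)
  refine ⟨g, hg, g * p / P.natDegree, by positivity, fun μ q hq => ?_⟩
  rw [memA_iff_exists_admissibleNumerator ha hp hP hd μ hq]
  constructor
  · rintro ⟨e, he, rfl, heμ⟩
    obtain ⟨k, hk, rfl⟩ := (hN e).1 he
    exact ⟨k, hk, by push_cast; ring, heμ⟩
  · rintro ⟨k, hk, rfl, hkμ⟩
    exact ⟨k * g, (hN _).2 ⟨k, hk, rfl⟩, by push_cast; ring, hkμ⟩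

theorem stmt_9_general (a : ℕ → ℝ) (hnc : ∃ i j : ℕ, a i ≠ a j)
    (m : ℕ) (p : ℝ) (hp : 0 < p) (hstrict : MemAhat a m p) :
    ∃! m₀p₀ : ℕ × ℝ, 2 ≤ m₀p₀.1 ∧ 0 < m₀p₀.2 ∧
      (∀ μ : ℕ, 1 ≤ μ → ∀ q : ℝ, 0 < q →
        (MemAhat a μ q ↔ ∃ k : ℕ, 1 ≤ k ∧ μ = k * (m₀p₀.1 - 1) + 1 ∧ q = (k : ℝ) * m₀p₀.2)) ∧
      (∀ μ : ℕ, 1 ≤ μ → ∀ q : ℝ, 0 < q →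
        (MemA a μ q ↔ ∃ k : ℕ, 1 ≤ k ∧ q = (k : ℝ) * m₀p₀.2 ∧ k * (m₀p₀.1 - 1) < μ)) := by
  obtain ⟨g, hg, p₀, hp₀, hA⟩ := exists_forall_memA_iff hnc hp hstrict.1
  have hAhat := memAhat_iff_exists_of_memA_iff hp₀ hA
  refine ⟨(g + 1, p₀), ⟨by omega, hp₀, fun μ _ q hq => by simpa using hAhat μ q hq,
    fun μ _ q hq => by simpa using hA μ q hq⟩, ?_⟩
  rintro ⟨m₁, p₁⟩ ⟨hm₁, hp₁, h₁, -⟩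
  obtain ⟨hgm₁, rfl⟩ := eq_of_forall_exists_mul_iff hg hp₀ hp₁ fun μ hμ q hq =>
    (hAhat μ q hq).symm.trans (h₁ μ hμ q hq)
  simp only [Prod.mk.injEq, and_true]
  omega

theorem stmt_9 (a : ℕ → ℝ) (ha : ∀ n, 0 ≤ a n) (hnc : ∃ i j : ℕ, a i ≠ a j)
    (m : ℕ) (hm : 1 ≤ m) (p : ℝ) (hp : 0 < p) (hstrict : MemAhat a m p) :
    ∃! m₀p₀ : ℕ × ℝ, 2 ≤ m₀p₀.1 ∧ 0 < m₀p₀.2 ∧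
      (∀ μ : ℕ, 1 ≤ μ → ∀ q : ℝ, 0 < q →
        (MemAhat a μ q ↔ ∃ k : ℕ, 1 ≤ k ∧ μ = k * (m₀p₀.1 - 1) + 1 ∧ q = (k : ℝ) * m₀p₀.2)) ∧
      (∀ μ : ℕ, 1 ≤ μ → ∀ q : ℝ, 0 < q →
        (MemA a μ q ↔ ∃ k : ℕ, 1 ≤ k ∧ q = (k : ℝ) * m₀p₀.2 ∧ k * (m₀p₀.1 - 1) < μ)) :=
  stmt_9_general a hnc m p hp hstrict
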